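/- One has the limit (r²/M²)·(1 − Δ(r)·h′(r)/(2(a² + r²))) → C꜀ as r → ∞. -/

import Mathlib

/-- The radius `r₊ = M + √(M² − a²)` of the Kerr event horizon. -/
noncomputable def rplus (M a : ℝ) : ℝ := M + Real.sqrt (M ^ 2 - a ^ 2)

/-- The height function `h` defining the hyperboloidal time function `τ = v − h(r)`. -/
noncomputable def hKerr (M a Cc : ℝ) (r : ℝ) : ℝ :=
  2 * (r - rplus M a) + 4 * M * Real.log (r / rplus M a)
    + 3 * M ^ 2 * (rplus M a - r) ^ 2 / (rplus M a * r ^ 2)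
    + 2 * M * Real.arctan ((Cc - 1) * M / r)
    - 2 * M * Real.arctan ((Cc - 1) * M / rplus M a)

lemma rplus_pos (M a : ℝ) (hM : 0 < M) : 0 < rplus M a := by
  unfold rplus
  have := Real.sqrt_nonneg (M ^ 2 - a ^ 2)
  linarith

lemma hKerr_deriv (M a Cc : ℝ) (hM : 0 < M) (r : ℝ) (hr : 0 < r) :
    deriv (hKerr M a Cc) r =
      2 + 4 * M / r + 6 * M ^ 2 / r ^ 2 - 6 * M ^ 2 * rplus M a / r ^ 3
        - 2 * M * ((Cc - 1) * M) / (r ^ 2 + ((Cc - 1) * M) ^ 2) := by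
  set p := rplus M a with hpdef
  set k := (Cc - 1) * M with hkdef
  have hp : 0 < p := rplus_pos M a hM
  have hr0 : r ≠ 0 := hr.ne'
  have hp0 : p ≠ 0 := hp.ne'
  -- term 1
  have h1 : HasDerivAt (fun r : ℝ => 2 * (r - p)) (2 * 1) r :=
    ((hasDerivAt_id r).sub_const p).const_mul 2
  -- term 2
  have hinner2 : HasDerivAt (fun r : ℝ => r / p) (1 / p) r := by
    simpa using (hasDerivAt_id r).div_const p
  have hlog : HasDerivAt (fun r : ℝ => Real.log (r / p)) ((r / p)⁻¹ * (1 / p)) r :=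
    by have := (Real.hasDerivAt_log (div_ne_zero hr0 hp0)).comp r hinner2; exact this
  have h2 : HasDerivAt (fun r : ℝ => 4 * M * Real.log (r / p))
      (4 * M * ((r / p)⁻¹ * (1 / p))) r := hlog.const_mul (4 * M)
  -- term 3
  have hnum : HasDerivAt (fun r : ℝ => 3 * M ^ 2 * (p - r) ^ 2)
      (3 * M ^ 2 * ((2 : ℕ) * (p - r) ^ 1 * (-1))) r :=
    (((hasDerivAt_id r).const_sub p).pow 2).const_mul (3 * M ^ 2)
  have hden : HasDerivAt (fun r : ℝ => p * r ^ 2) (p * ((2 : ℕ) * r ^ 1)) r :=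
    (hasDerivAt_pow 2 r).const_mul p
  have hden0 : p * r ^ 2 ≠ 0 := by positivity
  have h3 : HasDerivAt (fun r : ℝ => 3 * M ^ 2 * (p - r) ^ 2 / (p * r ^ 2))
      ((3 * M ^ 2 * ((2 : ℕ) * (p - r) ^ 1 * (-1)) * (p * r ^ 2)
        - 3 * M ^ 2 * (p - r) ^ 2 * (p * ((2 : ℕ) * r ^ 1))) / (p * r ^ 2) ^ 2) r :=
    hnum.div hden hden0
  -- term 4
  have hinner4 : HasDerivAt (fun r : ℝ => k / r) ((0 * r - k * 1) / r ^ 2) r :=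
    (hasDerivAt_const r k).div (hasDerivAt_id r) hr0
  have harctan : HasDerivAt (fun r : ℝ => Real.arctan (k / r))
      (1 / (1 + (k / r) ^ 2) * ((0 * r - k * 1) / r ^ 2)) r :=
    (Real.hasDerivAt_arctan (k / r)).comp r hinner4
  have h4 : HasDerivAt (fun r : ℝ => 2 * M * Real.arctan (k / r))
      (2 * M * (1 / (1 + (k / r) ^ 2) * ((0 * r - k * 1) / r ^ 2))) r :=
    harctan.const_mul (2 * M)
  have htot : HasDerivAt (hKerr M a Cc)
      (2 * 1 + 4 * M * ((r / p)⁻¹ * (1 / p))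
        + (3 * M ^ 2 * ((2 : ℕ) * (p - r) ^ 1 * (-1)) * (p * r ^ 2)
            - 3 * M ^ 2 * (p - r) ^ 2 * (p * ((2 : ℕ) * r ^ 1))) / (p * r ^ 2) ^ 2
        + 2 * M * (1 / (1 + (k / r) ^ 2) * ((0 * r - k * 1) / r ^ 2))) r := by
    unfold hKerr
    rw [← hpdef, ← hkdef]
    exact (((h1.add h2).add h3).add h4).sub_const (2 * M * Real.arctan (k / p))
  rw [htot.deriv]
  have hk2 : (1 : ℝ) + (k / r) ^ 2 ≠ 0 := by positivity
  have hrk : r ^ 2 + k ^ 2 ≠ 0 := by positivity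
  field_simp
  ring

/-- The asymptotic normalization of the hyperboloidal time function:
`(r²/M²)·(1 − Δ(r)h′(r)/(2(a² + r²))) → C꜀` as `r → ∞`, where `Δ(r) = r² − 2Mr + a²`. -/
theorem V_tau_limit (M a Cc : ℝ) (hM : 0 < M) (ha : |a| < M) (hCc : 1 ≤ Cc) :
    Filter.Tendsto
      (fun r => r ^ 2 / M ^ 2 *
        (1 - (r ^ 2 - 2 * M * r + a ^ 2) * deriv (hKerr M a Cc) r / (2 * (a ^ 2 + r ^ 2))))
      Filter.atTop (nhds Cc) := by
  set p := rplus M a with hpdef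
  set k := (Cc - 1) * M with hkdef
  have hp : 0 < p := rplus_pos M a hM
  have hM0 : M ≠ 0 := hM.ne'
  set G : ℝ → ℝ := fun u =>
    (M ^ 2 + (3 * M ^ 2 * p + 6 * M ^ 3 - 2 * M * a ^ 2) * u
        - (6 * M ^ 3 * p + 3 * M ^ 2 * a ^ 2) * u ^ 2 + 3 * M ^ 2 * p * a ^ 2 * u ^ 3
        + M * k * (1 - 2 * M * u + a ^ 2 * u ^ 2) / (1 + k ^ 2 * u ^ 2))
      / (M ^ 2 * (a ^ 2 * u ^ 2 + 1)) with hGdef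
  have hGcont : ContinuousAt G 0 := by
    apply ContinuousAt.div
    · apply ContinuousAt.add
      · fun_prop
      · apply ContinuousAt.div
        · fun_prop
        · fun_prop
        · norm_num
    · fun_prop
    · positivity
  have hG0 : G 0 = Cc := by
    rw [hGdef]
    simp only [hkdef]
    field_simp
    ring
  have hinv : Filter.Tendsto (fun r : ℝ => 1 / r) Filter.atTop (nhds (0 : ℝ)) := by
    simpa [one_div] using tendsto_inv_atTop_zero
  have hmain : Filter.Tendsto (fun r : ℝ => G (1 / r)) Filter.atTop (nhds Cc) := by
    rw [← hG0]
    exact hGcont.tendsto.comp hinv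
  refine hmain.congr' ?_
  filter_upwards [Filter.eventually_gt_atTop 0] with r hr
  rw [hKerr_deriv M a Cc hM r hr, ← hpdef, ← hkdef]
  have hr0 : r ≠ 0 := hr.ne'
  have h1 : r ^ 2 + k ^ 2 ≠ 0 := by positivity
  have h2 : a ^ 2 + r ^ 2 ≠ 0 := by positivity
  have h3 : (1 : ℝ) + k ^ 2 * (1 / r) ^ 2 ≠ 0 := by positivity
  have h4 : a ^ 2 * (1 / r) ^ 2 + 1 ≠ 0 := by positivity
  rw [hGdef]
  field_simp
  ring
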